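/- For all integers n ≥ 2 and k ≥ 2, the median eigenvalues of W_{n,k} are 1 and −1: if λ_1 ≥ λ_2 ≥ … ≥ λ_{2nk} are the eigenvalues of the adjacency matrix of W_{n,k} over ℝ listed in nonincreasing order with multiplicity, then λ_{nk} = 1 and λ_{nk+1} = −1. -/

import Mathlib

/-!
The graph is bipartite with parts `{v_{i,j}}` and `{w_{i,j}}`, so conjugating its adjacency matrix
`A` by `diag(1, -1)` gives `-A`: the spectrum is symmetric about `0`, hence `λ_{2nk+1-m} = -λ_m`
and in particular `λ_{nk+1} = -λ_{nk}`. No eigenvalue lies in `(-1, 1)`, because `‖A x‖ ≥ ‖x‖`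
for all `x`: with `T_i = ∑_l x(w_{i,l})` one has `(A x)(v_{i,j}) = T_i + x(w_{i-1,j})`, and
`∑_{i,j} (A x)(v_{i,j})² - ∑ x(w)² = k ∑ T_i² + 2 ∑ T_i T_{i-1} ≥ ∑ (T_i + T_{i-1})² ≥ 0`
as `k ≥ 2`; likewise on the `w` side. Finally `1` is an eigenvalue, with eigenvector
`x(v_{i,j}) = x(w_{i,j}) = g_j` for a nonzero `g` with `∑ g = 0`. Now `λ_{nk} ≥ λ_{nk+1} = -λ_{nk}`
forces `λ_{nk} ≥ 1 > -1 ≥ λ_{nk+1}`, so the eigenvalue `1` sits at a position `≤ nk`, whence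
`λ_{nk} = 1` and `λ_{nk+1} = -1`.
-/

open Polynomial

/-- Vertex set of `W n k`: `Sum.inl (i, j)` is the vertex `v_{i,j}` and
`Sum.inr (i, j)` is the vertex `w_{i,j}`, for `i ∈ ℤ/nℤ` and `j ∈ {1, …, k}`. -/
abbrev WVert (n k : ℕ) : Type := (ZMod n × Fin k) ⊕ (ZMod n × Fin k)

/-- Adjacency of `W n k`: `v_{i,j} ~ w_{i',l}` iff `i' = i`, or `i = i' + 1` and `j = l`. -/
def WAdj (n k : ℕ) : WVert n k → WVert n k → Prop
  | Sum.inl p, Sum.inr q => q.1 = p.1 ∨ (p.1 = q.1 + 1 ∧ p.2 = q.2)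
  | Sum.inr q, Sum.inl p => q.1 = p.1 ∨ (p.1 = q.1 + 1 ∧ p.2 = q.2)
  | Sum.inl _, Sum.inl _ => False
  | Sum.inr _, Sum.inr _ => False

/-- The graph `W_{n,k}`: vertices `v_{i,j}` and `w_{i,j}` (`i ∈ ℤ/nℤ`, `1 ≤ j ≤ k`),
with edges `v_{i,j} w_{i,l}` for all `i, j, l`, and `w_{i,j} v_{i+1,j}` for all `i, j`. -/
def W (n k : ℕ) : SimpleGraph (WVert n k) where
  Adj := WAdj n k
  symm := by
    constructor
    rintro (p | p) (q | q) h
    · exact h.elim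
    · exact h
    · exact h
    · exact h.elim
  loopless := by constructor; rintro (p | p) h <;> exact h

instance (n k : ℕ) : DecidableRel (WAdj n k) := fun a b =>
  match a, b with
  | Sum.inl p, Sum.inr q =>
      inferInstanceAs (Decidable (q.1 = p.1 ∨ (p.1 = q.1 + 1 ∧ p.2 = q.2)))
  | Sum.inr q, Sum.inl p =>
      inferInstanceAs (Decidable (q.1 = p.1 ∨ (p.1 = q.1 + 1 ∧ p.2 = q.2)))
  | Sum.inl _, Sum.inl _ => inferInstanceAs (Decidable False)
  | Sum.inr _, Sum.inr _ => inferInstanceAs (Decidable False)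

instance (n k : ℕ) : DecidableRel (W n k).Adj :=
  inferInstanceAs (DecidableRel (WAdj n k))

open Finset Matrix

theorem Fintype.sum_ite_fst_eq_or_eq {ι κ M : Type*} [Fintype ι] [Fintype κ] [DecidableEq ι]
    [DecidableEq κ] [AddCommMonoid M] (f : ι × κ → M) {i : ι} {q : ι × κ} (hq : q.1 ≠ i) :
    ∑ p, (if p.1 = i ∨ p = q then f p else 0) = ∑ l, f (i, l) + f q := by
  have hsplit : ∀ p : ι × κ, (if p.1 = i ∨ p = q then f p else 0) =
      (if p.1 = i then f p else 0) + (if p = q then f p else 0) := by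
    intro p
    by_cases hp : p = q
    · subst hp; simp [hq]
    · simp [hp]
  simp only [hsplit, sum_add_distrib, sum_ite_eq', Fintype.sum_prod_type]
  rw [sum_comm]
  simp only [sum_ite_eq']

theorem Fintype.sum_sq_le_sum_sq_add_perm {ι κ : Type*} [Fintype ι] [Fintype κ]
    (hκ : 2 ≤ Fintype.card κ) (σ : Equiv.Perm ι) (t : ι × κ → ℝ) :
    ∑ p, t p ^ 2 ≤ ∑ p : ι × κ, (∑ l, t (p.1, l) + t (σ p.1, p.2)) ^ 2 := by
  rw [Fintype.sum_prod_type, Fintype.sum_prod_type]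
  set T : ι → ℝ := fun i => ∑ l, t (i, l)
  change _ ≤ ∑ i, ∑ j, (T i + t (σ i, j)) ^ 2
  have hexpand : ∀ i, ∑ j, (T i + t (σ i, j)) ^ 2 =
      Fintype.card κ * T i ^ 2 + 2 * T i * T (σ i) + ∑ j, t (σ i, j) ^ 2 := by
    intro i
    simp only [add_sq, sum_add_distrib, ← mul_sum, sum_const, card_univ, nsmul_eq_mul, T]
  have hcross : 0 ≤ ∑ i, (Fintype.card κ * T i ^ 2 + 2 * T i * T (σ i)) := by
    have hκ' : (2 : ℝ) ≤ Fintype.card κ := by exact_mod_cast hκ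
    calc (0 : ℝ) ≤ ∑ i, (T i + T (σ i)) ^ 2 + (Fintype.card κ - 2) * ∑ i, T i ^ 2 := by
          have h₁ : 0 ≤ ∑ i, (T i + T (σ i)) ^ 2 := Finset.sum_nonneg fun i _ => sq_nonneg _
          have h₂ : 0 ≤ ∑ i, T i ^ 2 := Finset.sum_nonneg fun i _ => sq_nonneg _
          nlinarith
      _ = _ := by
          simp only [add_sq, sum_add_distrib, ← mul_sum, Equiv.sum_comp σ (fun i => T i ^ 2)]
          ring
  simp only [hexpand, sum_add_distrib, Equiv.sum_comp σ (fun i => ∑ j, t (i, j) ^ 2)]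
  rw [sum_add_distrib] at hcross
  linarith

namespace Matrix

variable {ι K : Type*} [Fintype ι] [DecidableEq ι] [Field K]

theorem isRoot_charpoly_iff_exists_mulVec_eq_smul (A : Matrix ι ι K) (r : K) :
    A.charpoly.IsRoot r ↔ ∃ x ≠ 0, A *ᵥ x = r • x := by
  rw [← charpoly_toLin', ← Module.End.hasEigenvalue_iff_isRoot_charpoly]
  constructor
  · intro h
    obtain ⟨x, hx⟩ := h.exists_hasEigenvector
    exact ⟨x, hx.2, hx.apply_eq_smul⟩
  · rintro ⟨x, hx0, hx⟩
    exact Module.End.hasEigenvalue_of_hasEigenvector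
      ⟨Module.End.mem_eigenspace_iff.2 hx, hx0⟩

theorem one_le_sq_of_isRoot_charpoly {A : Matrix ι ι ℝ}
    (hA : ∀ x, x ⬝ᵥ x ≤ A *ᵥ x ⬝ᵥ A *ᵥ x) {r : ℝ} (hr : A.charpoly.IsRoot r) : 1 ≤ r ^ 2 := by
  obtain ⟨x, hx0, hx⟩ := (isRoot_charpoly_iff_exists_mulVec_eq_smul A r).1 hr
  have hpos : 0 < x ⬝ᵥ x := lt_of_le_of_ne (Finset.sum_nonneg fun i _ => mul_self_nonneg (x i))
    (Ne.symm (mt dotProduct_self_eq_zero.1 hx0))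
  have := hA x
  rw [hx, smul_dotProduct, dotProduct_smul, smul_eq_mul, smul_eq_mul, ← mul_assoc] at this
  nlinarith

variable {α β R : Type*} [Fintype α] [Fintype β] [DecidableEq α] [DecidableEq β] [CommRing R]

theorem charpoly_comp_neg_X_of_diagonal_blocks_eq_zero (A : Matrix (α ⊕ β) (α ⊕ β) R)
    (hαα : ∀ i j, A (.inl i) (.inl j) = 0) (hββ : ∀ i j, A (.inr i) (.inr j) = 0) :
    A.charpoly.comp (-X) = (-1) ^ (Fintype.card α + Fintype.card β) * A.charpoly := by
  set D : Matrix (α ⊕ β) (α ⊕ β) R[X] := diagonal (Sum.elim 1 (-1))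
  have hD : D.det * D.det = 1 := by
    rw [← det_mul, diagonal_mul_diagonal, ← det_one (n := α ⊕ β)]
    ext (i | i) : 1 <;> simp
  have hmap : (compRingHom (-X)).mapMatrix A.charmatrix = -(D * A.charmatrix * D) := by
    ext (i | i) (j | j) : 1 <;> simp [D, charmatrix_apply, diagonal_apply, hαα, hββ]
      <;> split_ifs <;> simp_all
  rw [charpoly, ← coe_compRingHom_apply, RingHom.map_det, hmap, det_neg, det_mul, det_mul,
    Fintype.card_sum, mul_right_comm, hD, one_mul]

theorem roots_charpoly_map_neg_of_diagonal_blocks_eq_zero [IsDomain R]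
    (A : Matrix (α ⊕ β) (α ⊕ β) R)
    (hαα : ∀ i j, A (.inl i) (.inl j) = 0) (hββ : ∀ i j, A (.inr i) (.inr j) = 0) :
    A.charpoly.roots.map (fun x ↦ -x) = A.charpoly.roots := by
  rw [← roots_comp_neg_X, A.charpoly_comp_neg_X_of_diagonal_blocks_eq_zero hαα hββ,
    ← C_1, ← C_neg, ← C_pow, roots_C_mul _ (pow_ne_zero _ (neg_ne_zero.2 one_ne_zero))]

end Matrix

theorem Antitone.apply_rev_eq_neg {α : Type*} [AddCommGroup α] [LinearOrder α]
    [IsOrderedAddMonoid α] {N : ℕ} {f : Fin N → α} (hf : Antitone f)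
    (hsymm : (univ.val.map f).map (fun x ↦ -x) = univ.val.map f) (i : Fin N) :
    f i.rev = -f i := by
  have hanti : Antitone fun i : Fin N ↦ -f i.rev :=
    fun a b hab ↦ neg_le_neg (hf (Fin.rev_le_rev.2 hab))
  have hperm : (List.ofFn fun i : Fin N ↦ -f i.rev).Perm (List.ofFn f) := by
    rw [← Multiset.coe_eq_coe, ← Fin.univ_val_map, ← Fin.univ_val_map, ← hsymm, Multiset.map_map]
    conv_rhs => rw [← Multiset.map_univ_val_equiv Fin.revPerm, Multiset.map_map]
    rfl
  have := congrFun (List.ofFn_injective (hperm.eq_of_pairwise' hanti.sortedGE_ofFn.pairwise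
    hf.sortedGE_ofFn.pairwise)) i
  simp only [← this, neg_neg]

theorem Antitone.apply_eq_one_and_apply_rev_eq_neg_one {N : ℕ} {f : Fin N → ℝ}
    (hf : Antitone f) (hrev : ∀ i, f i.rev = -f i) (hgap : ∀ i, 1 ≤ f i ^ 2)
    (hone : ∃ i, f i = 1) {i : Fin N} (hi : (i : ℕ) + 1 = i.rev) :
    f i = 1 ∧ f i.rev = -1 := by
  have hnonneg : 0 ≤ f i := by
    have := hf (show i ≤ i.rev from Fin.le_def.2 (by omega))
    rw [hrev] at this
    linarith
  have hge : 1 ≤ f i := by nlinarith [hgap i]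
  obtain ⟨j, hj⟩ := hone
  have hji : j ≤ i := by
    by_contra! hij
    have := hf (show i.rev ≤ j from Fin.le_def.2 (by omega))
    rw [hrev] at this
    linarith
  have := hf hji
  exact ⟨by linarith, by rw [hrev]; linarith⟩

section W

variable {n k : ℕ}

@[simp]
theorem W_not_adj_inl_inl (p q : ZMod n × Fin k) : ¬ (W n k).Adj (.inl p) (.inl q) := id

@[simp]
theorem W_not_adj_inr_inr (p q : ZMod n × Fin k) : ¬ (W n k).Adj (.inr p) (.inr q) := id

theorem W_adj_inl_inr_iff {p q : ZMod n × Fin k} :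
    (W n k).Adj (.inl p) (.inr q) ↔ q.1 = p.1 ∨ q = (p.1 - 1, p.2) := by
  change q.1 = p.1 ∨ (p.1 = q.1 + 1 ∧ p.2 = q.2) ↔ _
  rw [Prod.ext_iff, eq_sub_iff_add_eq, eq_comm (a := q.1 + 1), eq_comm (a := q.2)]

theorem W_adj_inr_inl_iff {p q : ZMod n × Fin k} :
    (W n k).Adj (.inr p) (.inl q) ↔ q.1 = p.1 ∨ q = (p.1 + 1, p.2) := by
  change p.1 = q.1 ∨ (q.1 = p.1 + 1 ∧ q.2 = p.2) ↔ _
  rw [Prod.ext_iff, eq_comm (a := p.1)]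

variable [NeZero n] {R : Type*} [NonAssocSemiring R]

theorem W_adjMatrix_mulVec_inl (hn : 2 ≤ n) (x : WVert n k → R) (i : ZMod n) (j : Fin k) :
    ((W n k).adjMatrix R *ᵥ x) (.inl (i, j)) = ∑ l, x (.inr (i, l)) + x (.inr (i - 1, j)) := by
  have : Fact (1 < n) := ⟨hn⟩
  simp only [mulVec, dotProduct, Fintype.sum_sum_type, SimpleGraph.adjMatrix_apply,
    W_not_adj_inl_inl, if_false, zero_mul, sum_const_zero, zero_add, ite_mul, one_mul,
    W_adj_inl_inr_iff]
  exact Fintype.sum_ite_fst_eq_or_eq (fun q => x (.inr q)) (by simp)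

theorem W_adjMatrix_mulVec_inr (hn : 2 ≤ n) (x : WVert n k → R) (i : ZMod n) (j : Fin k) :
    ((W n k).adjMatrix R *ᵥ x) (.inr (i, j)) = ∑ l, x (.inl (i, l)) + x (.inl (i + 1, j)) := by
  have : Fact (1 < n) := ⟨hn⟩
  simp only [mulVec, dotProduct, Fintype.sum_sum_type, SimpleGraph.adjMatrix_apply,
    W_not_adj_inr_inr, if_false, zero_mul, sum_const_zero, add_zero, ite_mul, one_mul,
    W_adj_inr_inl_iff]
  exact Fintype.sum_ite_fst_eq_or_eq (fun q => x (.inl q)) (by simp)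

theorem W_dotProduct_self_le_adjMatrix_mulVec (hn : 2 ≤ n) (hk : 2 ≤ k) (x : WVert n k → ℝ) :
    x ⬝ᵥ x ≤ (W n k).adjMatrix ℝ *ᵥ x ⬝ᵥ (W n k).adjMatrix ℝ *ᵥ x := by
  have hκ : 2 ≤ Fintype.card (Fin k) := by simpa using hk
  simp only [dotProduct, ← sq, Fintype.sum_sum_type, W_adjMatrix_mulVec_inl hn,
    W_adjMatrix_mulVec_inr hn, sub_eq_add_neg]
  rw [add_comm (∑ p, x (.inl p) ^ 2)]
  exact add_le_add (Fintype.sum_sq_le_sum_sq_add_perm hκ (Equiv.addRight (-1)) _)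
    (Fintype.sum_sq_le_sum_sq_add_perm hκ (Equiv.addRight 1) _)

theorem W_isRoot_charpoly_one (hn : 2 ≤ n) (hk : 2 ≤ k) :
    ((W n k).adjMatrix ℝ).charpoly.IsRoot 1 := by
  set a : Fin k := ⟨0, by omega⟩
  set b : Fin k := ⟨1, by omega⟩
  have hab : a ≠ b := by simp [a, b, Fin.ext_iff]
  set g : Fin k → ℝ := Pi.single a 1 - Pi.single b 1
  have hg : ∑ l, g l = 0 := by simp [g, sum_sub_distrib]
  set x : WVert n k → ℝ := Sum.elim (fun p => g p.2) (fun p => g p.2)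
  refine (isRoot_charpoly_iff_exists_mulVec_eq_smul _ 1).2 ⟨x, fun h => ?_, ?_⟩
  · have := congrFun h (.inl (0, a))
    simp [x, g, hab] at this
  · ext (⟨i, j⟩ | ⟨i, j⟩) <;>
      simp [W_adjMatrix_mulVec_inl hn, W_adjMatrix_mulVec_inr hn, x, hg]

end W

/-- `lam` is indexed from `0`, so `lam ⟨n * k - 1, _⟩` and `lam ⟨n * k, _⟩` are `λ_{nk}` and
`λ_{nk+1}`. -/
theorem W_median_eigenvalues (n k : ℕ) [NeZero n] (hn : 2 ≤ n) (hk : 2 ≤ k)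
    (lam : Fin (2 * n * k) → ℝ) (hmono : Antitone lam)
    (hroots : ((W n k).adjMatrix ℝ).charpoly = ∏ i, (X - C (lam i))) :
    lam ⟨n * k - 1, lt_of_le_of_lt (Nat.sub_le _ _) (by nlinarith)⟩ = 1 ∧ lam ⟨n * k, by nlinarith⟩ = -1 := by
  set A := (W n k).adjMatrix ℝ
  have hspec : A.charpoly.roots = univ.val.map lam := by
    simpa [hroots, prod_eq_multiset_prod, Multiset.map_map, Function.comp_def] using
      roots_multiset_prod_X_sub_C (univ.val.map lam)
  have hmem (r : ℝ) : r ∈ univ.val.map lam ↔ A.charpoly.IsRoot r := by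
    rw [← hspec, mem_roots (charpoly_monic A).ne_zero]
  have hsymm : (univ.val.map lam).map (fun x ↦ -x) = univ.val.map lam := by
    rw [← hspec]
    exact roots_charpoly_map_neg_of_diagonal_blocks_eq_zero A (fun _ _ ↦ by simp [A])
      (fun _ _ ↦ by simp [A])
  have hgap (i) : 1 ≤ lam i ^ 2 :=
    one_le_sq_of_isRoot_charpoly (W_dotProduct_self_le_adjMatrix_mulVec hn hk)
      ((hmem _).1 (Multiset.mem_map_of_mem _ (mem_univ_val i)))
  have hone : ∃ i, lam i = 1 := by simpa using (hmem 1).2 (W_isRoot_charpoly_one hn hk)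
  have hnk : 2 * n * k = 2 * (n * k) := by ring
  have hpos : 1 ≤ n * k := by nlinarith
  have hrev : Fin.rev ⟨n * k - 1, by omega⟩ = (⟨n * k, by omega⟩ : Fin (2 * n * k)) :=
    Fin.ext (by simp only [Fin.val_rev]; omega)
  have hmid := hmono.apply_eq_one_and_apply_rev_eq_neg_one (hmono.apply_rev_eq_neg hsymm) hgap
    hone (i := ⟨n * k - 1, by omega⟩) (by rw [hrev]; exact Nat.sub_add_cancel hpos)
  rwa [hrev] at hmid
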